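/- Let X be a metric space with an upper curvature bound. If for every x ∈ X there exist arbitrarily small r > 0 such that the punctured ball B_r(x) \ {x} is non-contractible, then X is locally geodesically complete. -/

import Mathlib

noncomputable section

open CategoryTheory Metric Filter Set Topology MeasureTheory
open scoped NNReal ENNReal Manifold

universe u v w


/-- `γ` restricted to `[a,b]` is a unit-speed minimizing geodesic. -/
def IsGeodesicOn {X : Type u} [MetricSpace X] (γ : ℝ → X) (a b : ℝ) : Prop :=
  ∀ s ∈ Set.Icc a b, ∀ t ∈ Set.Icc a b, dist (γ s) (γ t) = |s - t|

/-- A geodesic metric space: any two points are joined by a unit speed minimizing geodesic. -/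
def IsGeodesicSpace (X : Type u) [MetricSpace X] : Prop :=
  ∀ x y : X, ∃ γ : ℝ → X, γ 0 = x ∧ γ (dist x y) = y ∧ IsGeodesicOn γ 0 (dist x y)

/-- `γ` restricted to `[a,b]` is a (unit-speed) local geodesic: around every parameter it is
a minimizing geodesic. -/
def IsLocalGeodesicOn {X : Type u} [MetricSpace X] (γ : ℝ → X) (a b : ℝ) : Prop :=
  ∀ t ∈ Set.Icc a b, ∃ ε > 0, IsGeodesicOn γ (max a (t - ε)) (min b (t + ε))

/-- A metric space is locally geodesically complete if every local geodesic `γ : [a,b] → X`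
extends as a local geodesic to a larger interval `[a-ε, b+ε]`. -/
def LocallyGeodesicallyComplete (X : Type u) [MetricSpace X] : Prop :=
  ∀ (γ : ℝ → X) (a b : ℝ), a < b → IsLocalGeodesicOn γ a b →
    ∃ ε > 0, ∃ γ' : ℝ → X,
      IsLocalGeodesicOn γ' (a - ε) (b + ε) ∧ ∀ t ∈ Set.Icc a b, γ' t = γ t

/-- Inverse hyperbolic cosine. -/
def arcoshAux (x : ℝ) : ℝ := Real.log (x + Real.sqrt (x ^ 2 - 1))

/-- The angle at a vertex of a triangle in the model plane `M_κ` of constant curvature `κ`,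
between two sides of lengths `a` and `b`, where the opposite side has length `c`
(laws of cosines in the Euclidean plane, the round sphere, and the hyperbolic plane). -/
def modelAngle (κ a b c : ℝ) : ℝ :=
  if κ = 0 then Real.arccos ((a ^ 2 + b ^ 2 - c ^ 2) / (2 * a * b))
  else if 0 < κ then
    Real.arccos ((Real.cos (Real.sqrt κ * c) - Real.cos (Real.sqrt κ * a) * Real.cos (Real.sqrt κ * b)) /
      (Real.sin (Real.sqrt κ * a) * Real.sin (Real.sqrt κ * b)))
  else
    Real.arccos ((Real.cosh (Real.sqrt (-κ) * a) * Real.cosh (Real.sqrt (-κ) * b) -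
      Real.cosh (Real.sqrt (-κ) * c)) /
      (Real.sinh (Real.sqrt (-κ) * a) * Real.sinh (Real.sqrt (-κ) * b)))

/-- The length of the side opposite to the angle `θ` in a triangle of the model plane `M_κ` of
constant curvature `κ` whose two other sides have lengths `a` and `b`. -/
def modelSide (κ a b θ : ℝ) : ℝ :=
  if κ = 0 then Real.sqrt (a ^ 2 + b ^ 2 - 2 * a * b * Real.cos θ)
  else if 0 < κ then
    Real.arccos (Real.cos (Real.sqrt κ * a) * Real.cos (Real.sqrt κ * b) +
      Real.sin (Real.sqrt κ * a) * Real.sin (Real.sqrt κ * b) * Real.cos θ) / Real.sqrt κ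
  else
    arcoshAux (Real.cosh (Real.sqrt (-κ) * a) * Real.cosh (Real.sqrt (-κ) * b) -
      Real.sinh (Real.sqrt (-κ) * a) * Real.sinh (Real.sqrt (-κ) * b) * Real.cos θ) / Real.sqrt (-κ)

/-- The CAT(κ) comparison condition: every geodesic triangle of perimeter `< 2·π/√κ`
(no restriction if `κ ≤ 0`) is at least as thin as its comparison triangle in the model
plane `M_κ`: the distance from a vertex `p` to the point at parameter `t` on a geodesic
joining `q` to `r` is bounded by the corresponding distance in the comparison triangle. -/
def CATComparison (κ : ℝ) (X : Type u) [MetricSpace X] : Prop :=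
  ∀ p q r : X, ∀ γ : ℝ → X,
    γ 0 = q → γ (dist q r) = r → IsGeodesicOn γ 0 (dist q r) →
    (0 < κ → dist p q + dist q r + dist p r < 2 * (Real.pi / Real.sqrt κ)) →
    ∀ t ∈ Set.Icc 0 (dist q r),
      dist p (γ t) ≤ modelSide κ (dist p q) t (modelAngle κ (dist p q) (dist q r) (dist p r))

/-- A CAT(κ) space: a complete geodesic space in which every geodesic triangle of perimeter
less than `2·π/√κ` (no restriction if `κ ≤ 0`) is at least as thin as its comparison triangle
in the simply connected complete surface of constant curvature `κ`. -/
def IsCATSpace (κ : ℝ) (X : Type u) [MetricSpace X] : Prop :=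
  CompleteSpace X ∧ IsGeodesicSpace X ∧ CATComparison κ X

/-- `X` has curvature bounded above by `κ` (in the sense of Alexandrov) if every point has a
neighborhood which is a CAT(κ) space. -/
def CurvBoundedAbove (κ : ℝ) (X : Type u) [MetricSpace X] : Prop :=
  ∀ x : X, ∃ U : Set X, U ∈ nhds x ∧ IsCATSpace κ ↥U

/-- `X` has an upper curvature bound if it has curvature bounded above by some `κ ∈ ℝ`. -/
def HasUpperCurvatureBound (X : Type u) [MetricSpace X] : Prop :=
  ∃ κ : ℝ, CurvBoundedAbove κ X

/-- A GCBA space: a locally compact, separable metric space with an upper curvature bound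
which is locally geodesically complete. -/
def IsGCBA (X : Type u) [MetricSpace X] : Prop :=
  LocallyCompactSpace X ∧ TopologicalSpace.SeparableSpace X ∧
    HasUpperCurvatureBound X ∧ LocallyGeodesicallyComplete X

/- ## Spaces of directions and tangent cones -/

/-- The Euclidean comparison angle at the vertex of a triangle with adjacent sides `s, t` and
opposite side `d`. -/
def comparisonAngle (s t d : ℝ) : ℝ := Real.arccos ((s ^ 2 + t ^ 2 - d ^ 2) / (2 * s * t))

/-- `γ` is a unit-speed geodesic emanating from `x`. -/
def IsGeodesicFrom {X : Type u} [MetricSpace X] (x : X) (γ : ℝ → X) : Prop :=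
  γ 0 = x ∧ ∃ ε > 0, IsGeodesicOn γ 0 ε

/-- The type of unit speed geodesics emanating from `x`. -/
def GeodesicsFrom (X : Type u) [MetricSpace X] (x : X) : Type u :=
  {γ : ℝ → X // IsGeodesicFrom x γ}

/-- The upper angle between two geodesics emanating from the same point: the limsup of the
Euclidean comparison angles. -/
def upperAngle {X : Type u} [MetricSpace X] (γ σ : ℝ → X) : ℝ :=
  Filter.limsup (fun p : ℝ × ℝ => comparisonAngle p.1 p.2 (dist (γ p.1) (σ p.2)))
    ((nhdsWithin (0:ℝ) (Set.Ioi 0)) ×ˢ (nhdsWithin (0:ℝ) (Set.Ioi 0)))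

/-- `S` is (isometric to) the space of directions of `X` at `x`: the completion of the space of
directions of geodesics emanating from `x`, equipped with the angle metric.  This is encoded by
a map from geodesics emanating from `x` onto a dense subset of the complete space `S`,
which carries the upper angle to the distance of `S`. -/
def IsSpaceOfDirections (X : Type u) [MetricSpace X] (x : X) (S : Type v) [MetricSpace S] :
    Prop :=
  CompleteSpace S ∧ ∃ ι : GeodesicsFrom X x → S,
    DenseRange ι ∧ ∀ γ σ : GeodesicsFrom X x, dist (ι γ) (ι σ) = upperAngle γ.1 σ.1

/-- `T` is (isometric to) the tangent cone of `X` at `x`, i.e. the Euclidean cone over the space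
of directions of `X` at `x`.  This is encoded by a map `f` sending a radius `s ≥ 0` and a
geodesic emanating from `x` to a point of `T`, satisfying the Euclidean cone distance formula
with respect to the upper angle, and whose image (together with the apex `o`) is dense in the
complete space `T`. -/
def IsTangentCone (X : Type u) [MetricSpace X] (x : X) (T : Type v) [MetricSpace T] : Prop :=
  CompleteSpace T ∧ ∃ (o : T) (f : ℝ≥0 × GeodesicsFrom X x → T),
    (∀ γ, f (0, γ) = o) ∧
    Dense (insert o (Set.range f)) ∧
    ∀ (s t : ℝ≥0) (γ σ : GeodesicsFrom X x),
      dist (f (s, γ)) (f (t, σ)) =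
        Real.sqrt ((s:ℝ) ^ 2 + (t:ℝ) ^ 2 -
          2 * s * t * Real.cos (min (upperAngle γ.1 σ.1) Real.pi))

/-- The Euclidean cone over a metric space `S`, with apex `o`. -/
def IsEuclideanConeOver (S : Type u) [MetricSpace S] (C : Type v) [MetricSpace C] (o : C) :
    Prop :=
  ∃ f : ℝ≥0 × S → C,
    (∀ v, f (0, v) = o) ∧
    (∀ y : C, y = o ∨ ∃ p, f p = y) ∧
    ∀ (s t : ℝ≥0) (v w : S),
      dist (f (s, v)) (f (t, w)) =
        Real.sqrt ((s:ℝ) ^ 2 + (t:ℝ) ^ 2 - 2 * s * t * Real.cos (min (dist v w) Real.pi))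

/- ## Covering dimension and topological manifolds -/

/-- The covering dimension of `X` is at most `n`: every open cover admits an open refinement
of multiplicity at most `n + 1`. -/
def CovDimLE (X : Type u) [TopologicalSpace X] (n : ℕ) : Prop :=
  ∀ 𝒰 : Set (Set X), (∀ U ∈ 𝒰, IsOpen U) → ⋃₀ 𝒰 = Set.univ →
    ∃ 𝒱 : Set (Set X), (∀ V ∈ 𝒱, IsOpen V) ∧ ⋃₀ 𝒱 = Set.univ ∧
      (∀ V ∈ 𝒱, ∃ U ∈ 𝒰, V ⊆ U) ∧ ∀ x : X, Set.ncard {V | V ∈ 𝒱 ∧ x ∈ V} ≤ n + 1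

/-- `X` has finite (covering) topological dimension. -/
def HasFiniteCovDim (X : Type u) [TopologicalSpace X] : Prop := ∃ n : ℕ, CovDimLE X n

/-- The covering dimension of `X` is exactly `n`. -/
def CovDimEq (X : Type u) [TopologicalSpace X] (n : ℕ) : Prop :=
  CovDimLE X n ∧ ∀ m : ℕ, CovDimLE X m → n ≤ m

/-- `X` is purely `n`-dimensional: every non-empty open subset has covering dimension `n`. -/
def PurelyNDimensional (n : ℕ) (X : Type u) [TopologicalSpace X] : Prop :=
  ∀ V : Set X, IsOpen V → V.Nonempty → CovDimEq ↥V n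

/-- `X` is pure-dimensional: purely `n`-dimensional for some `n`. -/
def PureDimensional (X : Type u) [TopologicalSpace X] : Prop :=
  ∃ n : ℕ, PurelyNDimensional n X

/-- A topological `n`-manifold: a second countable Hausdorff space in which every point has an
open neighborhood homeomorphic to `ℝⁿ`. -/
def IsTopManifoldOfDim (n : ℕ) (X : Type u) [TopologicalSpace X] : Prop :=
  SecondCountableTopology X ∧ T2Space X ∧
    ∀ x : X, ∃ U : Set X, x ∈ U ∧ IsOpen U ∧ Nonempty (↥U ≃ₜ EuclideanSpace ℝ (Fin n))

/-- A topological manifold: a second countable Hausdorff space in which every point has an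
open neighborhood homeomorphic to `ℝⁿ` for some `n`. -/
def IsTopManifold (X : Type u) [TopologicalSpace X] : Prop :=
  SecondCountableTopology X ∧ T2Space X ∧
    ∀ x : X, ∃ (n : ℕ) (U : Set X), x ∈ U ∧ IsOpen U ∧
      Nonempty (↥U ≃ₜ EuclideanSpace ℝ (Fin n))

/-!
Let `γ` be a local geodesic ending at `x = γ b`, choose a small `r` such that `B_r(x)` lies in a
CAT(κ) neighbourhood of `x` and `B_r(x) \ {x}` is not contractible, and put `q = γ (b - r / 2)`.
If some `y ≠ x` in `B_r(x)` satisfies `d(q, y) = d(q, x) + d(x, y)`, then `γ` followed by the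
geodesic from `x` to `y` is again a geodesic, so `γ` extends. Otherwise no geodesic from `q`
meets `x`, and moving every point of `B_r(x) \ {x}` to `q` along its geodesic from `q` is a
contraction: small balls are convex, and the geodesics depend continuously on their endpoints,
both by comparison with the model plane. Extending at both ends (reversing `γ` in between)
gives local geodesic completeness.
-/

open Real

lemma arcoshAux_cosh {z : ℝ} (hz : 0 ≤ z) : arcoshAux (cosh z) = z := by
  have h : cosh z ^ 2 - 1 = sinh z ^ 2 := by linarith [cosh_sq z]
  rw [arcoshAux, h, sqrt_sq (sinh_nonneg_iff.2 hz), cosh_add_sinh, log_exp]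

lemma arcoshAux_le_arcoshAux {x y : ℝ} (hx : 1 ≤ x) (hxy : x ≤ y) :
    arcoshAux x ≤ arcoshAux y := by
  have hsqrt : √(x ^ 2 - 1) ≤ √(y ^ 2 - 1) := sqrt_le_sqrt (by nlinarith)
  exact log_le_log (by positivity) (by linarith)

lemma cos_modelAngle_zero {A L c : ℝ} (hA : 0 < A) (hL : 0 < L) (hc : |A - L| ≤ c)
    (hcAL : c ≤ A + L) :
    cos (modelAngle 0 A L c) = (A ^ 2 + L ^ 2 - c ^ 2) / (2 * A * L) := by
  obtain ⟨hc₁, hc₂⟩ := abs_le.1 hc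
  rw [modelAngle, if_pos rfl]
  refine cos_arccos ?_ ?_
  · rw [le_div_iff₀ (by positivity)]; nlinarith
  · rw [div_le_one (by positivity)]; nlinarith

/-- Euclidean case: the squared distance `g u = A² + u² - 2 A u cos θ` is convex in `u`, so on
`[0, L]` it is bounded by `max (g 0) (g L)`. -/
lemma modelSide_zero_le_max {A L c t θ : ℝ} (hA : 0 < A) (hL : 0 < L) (hc : 0 ≤ c)
    (ht : t ∈ Icc 0 L) (hθ : cos θ = (A ^ 2 + L ^ 2 - c ^ 2) / (2 * A * L)) :
    modelSide 0 A t θ ≤ max A c := by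
  have hcL : A ^ 2 + L ^ 2 - 2 * A * L * cos θ = c ^ 2 := by rw [hθ]; field_simp; ring
  have hinterp : L * (A ^ 2 + t ^ 2 - 2 * A * t * cos θ)
      = (L - t) * A ^ 2 + t * c ^ 2 - t * (L - t) * L := by rw [← hcL]; ring
  have hA' : A ^ 2 ≤ max A c ^ 2 := pow_le_pow_left₀ hA.le (le_max_left A c) 2
  have hc' : c ^ 2 ≤ max A c ^ 2 := pow_le_pow_left₀ hc (le_max_right A c) 2
  have hle : A ^ 2 + t ^ 2 - 2 * A * t * cos θ ≤ max A c ^ 2 := by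
    refine le_of_mul_le_mul_left ?_ hL
    nlinarith [mul_nonneg (mul_nonneg ht.1 (sub_nonneg.2 ht.2)) hL.le,
      mul_le_mul_of_nonneg_left hA' (sub_nonneg.2 ht.2), mul_le_mul_of_nonneg_left hc' ht.1]
  rw [modelSide, if_pos rfl]
  calc √(A ^ 2 + t ^ 2 - 2 * A * t * cos θ) ≤ √(max A c ^ 2) := sqrt_le_sqrt hle
    _ = max A c := sqrt_sq (hA.le.trans (le_max_left A c))

lemma cos_modelAngle_of_neg {κ A L c : ℝ} (hκ : κ < 0) (hA : 0 < A) (hL : 0 < L)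
    (hc : |A - L| ≤ c) (hcAL : c ≤ A + L) :
    cos (modelAngle κ A L c) = (cosh (√(-κ) * A) * cosh (√(-κ) * L) - cosh (√(-κ) * c)) /
      (sinh (√(-κ) * A) * sinh (√(-κ) * L)) := by
  set s := √(-κ)
  have hs : 0 < s := sqrt_pos.2 (by linarith)
  have hden : 0 < sinh (s * A) * sinh (s * L) :=
    mul_pos (sinh_pos_iff.2 (by positivity)) (sinh_pos_iff.2 (by positivity))
  have hc₀ : 0 ≤ c := (abs_nonneg _).trans hc
  rw [modelAngle, if_neg hκ.ne, if_neg hκ.not_gt]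
  refine cos_arccos ?_ ?_
  · have h : cosh (s * c) ≤ cosh (s * A + s * L) := by
      rw [cosh_le_cosh, abs_of_nonneg (by positivity), abs_of_nonneg (by positivity)]
      nlinarith
    rw [le_div_iff₀ hden]; linarith [cosh_add (s * A) (s * L)]
  · have h : cosh (s * A - s * L) ≤ cosh (s * c) := by
      rw [cosh_le_cosh, abs_of_nonneg (by positivity : 0 ≤ s * c), ← mul_sub, abs_mul,
        abs_of_pos hs]
      exact mul_le_mul_of_nonneg_left hc hs.le
    rw [div_le_one hden]; linarith [cosh_sub (s * A) (s * L)]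

lemma sinh_add_sinh_le_sinh_add {a b : ℝ} (ha : 0 ≤ a) (hb : 0 ≤ b) :
    sinh a + sinh b ≤ sinh (a + b) := by
  rw [sinh_add]
  nlinarith [one_le_cosh a, one_le_cosh b, sinh_nonneg_iff.2 ha, sinh_nonneg_iff.2 hb]

/-- Hyperbolic case: `g u = cosh (s * modelSide κ A u θ)` satisfies `g'' = s² g`, whence the
interpolation identity `sinh (s L) g t = sinh (s (L - t)) g 0 + sinh (s t) g L`. -/
lemma modelSide_le_max_of_neg {κ A L c t θ : ℝ} (hκ : κ < 0) (hA : 0 < A) (hL : 0 < L)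
    (hc : 0 ≤ c) (ht : t ∈ Icc 0 L)
    (hθ : cos θ = (cosh (√(-κ) * A) * cosh (√(-κ) * L) - cosh (√(-κ) * c)) /
      (sinh (√(-κ) * A) * sinh (√(-κ) * L))) :
    modelSide κ A t θ ≤ max A c := by
  set s := √(-κ)
  have hs : 0 < s := sqrt_pos.2 (by linarith)
  have hshA : 0 < sinh (s * A) := sinh_pos_iff.2 (by positivity)
  have hshL : 0 < sinh (s * L) := sinh_pos_iff.2 (by positivity)
  set g : ℝ → ℝ := fun u => cosh (s * A) * cosh (s * u) - sinh (s * A) * sinh (s * u) * cos θ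
  have hgL : g L = cosh (s * c) := by simp only [g, hθ]; field_simp; ring
  have hinterp : sinh (s * L) * g t = sinh (s * L - s * t) * cosh (s * A)
      + sinh (s * t) * g L := by simp only [g, sinh_sub]; ring
  have hM : cosh (s * A) ≤ cosh (s * max A c) ∧ cosh (s * c) ≤ cosh (s * max A c) := by
    simp only [cosh_le_cosh, abs_mul, abs_of_pos hs, abs_of_nonneg hA.le, abs_of_nonneg hc,
      abs_of_nonneg (hA.le.trans (le_max_left A c))]
    exact ⟨mul_le_mul_of_nonneg_left (le_max_left A c) hs.le,
      mul_le_mul_of_nonneg_left (le_max_right A c) hs.le⟩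
  have hsinh : sinh (s * L - s * t) + sinh (s * t) ≤ sinh (s * L) := by
    simpa using sinh_add_sinh_le_sinh_add (a := s * L - s * t) (b := s * t)
      (by nlinarith [ht.2]) (by nlinarith [ht.1])
  have hgt : g t ≤ cosh (s * max A c) := by
    refine le_of_mul_le_mul_left ?_ hshL
    have h₁ := sinh_nonneg_iff.2 (show 0 ≤ s * L - s * t by nlinarith [ht.2])
    have h₂ := sinh_nonneg_iff.2 (show 0 ≤ s * t by nlinarith [ht.1])
    nlinarith [mul_le_mul_of_nonneg_left hM.1 h₁, mul_le_mul_of_nonneg_left hM.2 h₂,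
      one_le_cosh (s * max A c), hgL]
  have hg₁ : 1 ≤ g t := by
    have hsht := sinh_nonneg_iff.2 (show 0 ≤ s * t by nlinarith [ht.1])
    nlinarith [cosh_sub (s * A) (s * t), one_le_cosh (s * A - s * t), cos_le_one θ,
      mul_nonneg hshA.le hsht]
  rw [modelSide, if_neg hκ.ne, if_neg hκ.not_gt]
  calc arcoshAux (g t) / s ≤ arcoshAux (cosh (s * max A c)) / s := by
        gcongr; exact arcoshAux_le_arcoshAux hg₁ hgt
    _ = max A c := by rw [arcoshAux_cosh (by positivity)]; field_simp

lemma cos_modelAngle_of_pos {κ A L c : ℝ} (hκ : 0 < κ) (hA : 0 < A) (hL : 0 < L)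
    (hc : |A - L| ≤ c) (hcAL : c ≤ A + L) (hsmall : √κ * (A + L) ≤ π) :
    cos (modelAngle κ A L c) = (cos (√κ * c) - cos (√κ * A) * cos (√κ * L)) /
      (sin (√κ * A) * sin (√κ * L)) := by
  set s := √κ
  have hs : 0 < s := sqrt_pos.2 hκ
  have hden : 0 < sin (s * A) * sin (s * L) :=
    mul_pos (sin_pos_of_pos_of_lt_pi (by positivity) (by nlinarith))
      (sin_pos_of_pos_of_lt_pi (by positivity) (by nlinarith))
  have hc₀ : 0 ≤ c := (abs_nonneg _).trans hc
  rw [modelAngle, if_neg hκ.ne', if_pos hκ]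
  refine cos_arccos ?_ ?_
  · have h : cos (s * A + s * L) ≤ cos (s * c) :=
      cos_le_cos_of_nonneg_of_le_pi (by positivity) (by linarith) (by nlinarith)
    rw [le_div_iff₀ hden]; linarith [cos_add (s * A) (s * L)]
  · have h : cos (s * c) ≤ cos (s * A - s * L) := by
      rw [← cos_abs (s * A - s * L), ← mul_sub, abs_mul, abs_of_pos hs]
      exact cos_le_cos_of_nonneg_of_le_pi (by positivity) (by nlinarith)
        (mul_le_mul_of_nonneg_left hc hs.le)
    rw [div_le_one hden]; linarith [cos_sub (s * A) (s * L)]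

lemma sin_add_le_sin_add_sin {a b : ℝ} (ha : 0 ≤ sin a) (hb : 0 ≤ sin b) :
    sin (a + b) ≤ sin a + sin b := by
  rw [sin_add]
  nlinarith [cos_le_one a, cos_le_one b]

/-- Spherical case: `g u = cos (s * modelSide κ A u θ)` satisfies `g'' = -s² g`, whence the
interpolation identity `sin (s L) g t = sin (s (L - t)) g 0 + sin (s t) g L`. -/
lemma modelSide_le_max_of_pos {κ A L c t θ : ℝ} (hκ : 0 < κ) (hA : 0 < A) (hL : 0 < L)
    (hc : 0 ≤ c) (hcAL : c ≤ A + L) (ht : t ∈ Icc 0 L) (hsmall : √κ * (A + L) ≤ π / 2)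
    (hθ : cos θ = (cos (√κ * c) - cos (√κ * A) * cos (√κ * L)) /
      (sin (√κ * A) * sin (√κ * L))) :
    modelSide κ A t θ ≤ max A c := by
  set s := √κ
  have hs : 0 < s := sqrt_pos.2 hκ
  have hsA : 0 < sin (s * A) := sin_pos_of_pos_of_lt_pi (by positivity) (by nlinarith [pi_pos])
  have hsL : 0 < sin (s * L) := sin_pos_of_pos_of_lt_pi (by positivity) (by nlinarith [pi_pos])
  have hmax : s * max A c ≤ π / 2 :=
    le_trans (mul_le_mul_of_nonneg_left (max_le (by linarith) hcAL) hs.le) hsmall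
  set g : ℝ → ℝ := fun u => cos (s * A) * cos (s * u) + sin (s * A) * sin (s * u) * cos θ
  have hgL : g L = cos (s * c) := by simp only [g, hθ]; field_simp; ring
  have hinterp : sin (s * L) * g t = sin (s * L - s * t) * cos (s * A)
      + sin (s * t) * g L := by simp only [g, sin_sub]; ring
  have hM : cos (s * max A c) ≤ cos (s * A) ∧ cos (s * max A c) ≤ cos (s * c) :=
    ⟨cos_le_cos_of_nonneg_of_le_pi (by positivity) (by linarith [pi_pos])
        (mul_le_mul_of_nonneg_left (le_max_left A c) hs.le),
      cos_le_cos_of_nonneg_of_le_pi (by positivity) (by linarith [pi_pos])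
        (mul_le_mul_of_nonneg_left (le_max_right A c) hs.le)⟩
  have h₁ : 0 ≤ sin (s * L - s * t) :=
    sin_nonneg_of_nonneg_of_le_pi (by nlinarith [ht.2]) (by nlinarith [ht.1, pi_pos])
  have h₂ : 0 ≤ sin (s * t) :=
    sin_nonneg_of_nonneg_of_le_pi (by nlinarith [ht.1]) (by nlinarith [ht.2, pi_pos])
  have hsin : sin (s * L) ≤ sin (s * L - s * t) + sin (s * t) := by
    simpa using sin_add_le_sin_add_sin h₁ h₂
  have hgt : cos (s * max A c) ≤ g t := by
    refine le_of_mul_le_mul_left ?_ hsL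
    have hm₀ : 0 ≤ cos (s * max A c) :=
      cos_nonneg_of_mem_Icc ⟨by linarith [pi_pos, mul_nonneg hs.le (hA.le.trans (le_max_left A c))], hmax⟩
    nlinarith [mul_le_mul_of_nonneg_left hM.1 h₁, mul_le_mul_of_nonneg_left hM.2 h₂]
  rw [modelSide, if_neg hκ.ne', if_pos hκ]
  calc arccos (g t) / s ≤ arccos (cos (s * max A c)) / s := by
        gcongr
    _ = max A c := by
        rw [arccos_cos (by positivity) (by linarith [pi_pos])]; field_simp

/-- Balls of radius `< π / (2 √κ)` in the model plane are convex. -/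
lemma modelSide_modelAngle_le_max {κ A L c t : ℝ} (hA : 0 < A) (hL : 0 < L)
    (hc : |A - L| ≤ c) (hcAL : c ≤ A + L) (ht : t ∈ Icc 0 L)
    (hsmall : 0 < κ → √κ * (A + L) ≤ π / 2) :
    modelSide κ A t (modelAngle κ A L c) ≤ max A c := by
  have hc₀ : 0 ≤ c := (abs_nonneg _).trans hc
  rcases lt_trichotomy κ 0 with hκ | rfl | hκ
  · exact modelSide_le_max_of_neg hκ hA hL hc₀ ht (cos_modelAngle_of_neg hκ hA hL hc hcAL)
  · exact modelSide_zero_le_max hA hL hc₀ ht (cos_modelAngle_zero hA hL hc hcAL)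
  · exact modelSide_le_max_of_pos hκ hA hL hc₀ hcAL ht (hsmall hκ)
      (cos_modelAngle_of_pos hκ hA hL hc hcAL (by linarith [hsmall hκ, pi_pos]))

lemma modelAngle_sub_eq_zero {κ A L : ℝ} (hA : 0 < A) (hAL : A ≤ L)
    (hsmall : 0 < κ → √κ * L < π) : modelAngle κ A L (L - A) = 0 := by
  have hL : 0 < L := hA.trans_le hAL
  rcases lt_trichotomy κ 0 with hκ | rfl | hκ
  · have hs : 0 < √(-κ) := sqrt_pos.2 (by linarith)
    have hden : sinh (√(-κ) * A) * sinh (√(-κ) * L) ≠ 0 :=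
      (mul_pos (sinh_pos_iff.2 (by positivity)) (sinh_pos_iff.2 (by positivity))).ne'
    rw [modelAngle, if_neg hκ.ne, if_neg hκ.not_gt, mul_sub, cosh_sub, ← arccos_one]
    congr 1
    field_simp
    ring
  · rw [modelAngle, if_pos rfl, ← arccos_one]
    congr 1
    field_simp
    ring
  · have hs : 0 < √κ := sqrt_pos.2 hκ
    have hden : sin (√κ * A) * sin (√κ * L) ≠ 0 :=
      (mul_pos (sin_pos_of_pos_of_lt_pi (by positivity) (by nlinarith [hsmall hκ]))
        (sin_pos_of_pos_of_lt_pi (by positivity) (hsmall hκ))).ne'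
    rw [modelAngle, if_neg hκ.ne', if_pos hκ, mul_sub, cos_sub, ← arccos_one]
    congr 1
    rw [div_eq_one_iff_eq hden]
    ring

lemma modelSide_self_zero (κ u : ℝ) : modelSide κ u u 0 = 0 := by
  rcases lt_trichotomy κ 0 with hκ | rfl | hκ
  · rw [modelSide, if_neg hκ.ne, if_neg hκ.not_gt, cos_zero, mul_one, ← sq, ← sq,
      cosh_sq_sub_sinh_sq, arcoshAux]
    norm_num
  · rw [modelSide, if_pos rfl, cos_zero]
    ring_nf
    exact sqrt_zero
  · rw [modelSide, if_neg hκ.ne', if_pos hκ, cos_zero, mul_one, ← sq, ← sq, add_comm,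
      sin_sq_add_cos_sq, arccos_one, zero_div]

lemma continuousAt_modelAngle {κ a b c : ℝ} (ha : 0 < a) (hb : 0 < b)
    (hsmall : 0 < κ → √κ * a < π ∧ √κ * b < π) :
    ContinuousAt (fun v : ℝ × ℝ × ℝ => modelAngle κ v.1 v.2.1 v.2.2) (a, b, c) := by
  rcases lt_trichotomy κ 0 with hκ | rfl | hκ
  · have hs : 0 < √(-κ) := sqrt_pos.2 (by linarith)
    have hden : sinh (√(-κ) * a) * sinh (√(-κ) * b) ≠ 0 :=
      (mul_pos (sinh_pos_iff.2 (by positivity)) (sinh_pos_iff.2 (by positivity))).ne'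
    simp only [modelAngle, if_neg hκ.ne, if_neg hκ.not_gt]
    exact continuous_arccos.continuousAt.comp (ContinuousAt.div (by fun_prop) (by fun_prop) hden)
  · simp only [modelAngle, if_pos]
    exact continuous_arccos.continuousAt.comp
      (ContinuousAt.div (by fun_prop) (by fun_prop) (by positivity))
  · have hs : 0 < √κ := sqrt_pos.2 hκ
    have hden : sin (√κ * a) * sin (√κ * b) ≠ 0 :=
      (mul_pos (sin_pos_of_pos_of_lt_pi (by positivity) (hsmall hκ).1)
        (sin_pos_of_pos_of_lt_pi (by positivity) (hsmall hκ).2)).ne'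
    simp only [modelAngle, if_neg hκ.ne', if_pos hκ]
    exact continuous_arccos.continuousAt.comp (ContinuousAt.div (by fun_prop) (by fun_prop) hden)

lemma continuousAt_arcoshAux {x : ℝ} (hx : 1 ≤ x) : ContinuousAt arcoshAux x :=
  (continuousAt_log (by positivity)).comp (by fun_prop)

lemma continuous_modelSide_self (κ : ℝ) :
    Continuous (fun p : ℝ × ℝ => modelSide κ p.1 p.1 p.2) := by
  rcases lt_trichotomy κ 0 with hκ | rfl | hκ
  · simp only [modelSide, if_neg hκ.ne, if_neg hκ.not_gt]
    refine Continuous.div_const (continuous_iff_continuousAt.2 fun p => ?_) _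
    refine (continuousAt_arcoshAux ?_).comp (by fun_prop)
    nlinarith [cosh_sq_sub_sinh_sq (√(-κ) * p.1), cos_le_one p.2, sq_nonneg (sinh (√(-κ) * p.1))]
  · simp only [modelSide, if_pos]
    fun_prop
  · simp only [modelSide, if_neg hκ.ne', if_pos hκ]
    fun_prop

/-- In the model plane, points at distance `u` from the apex on two sides of a triangle become
close as the triangle degenerates to a segment (`c → L - u`). -/
lemma tendsto_modelSide_self_modelAngle {κ t₀ L : ℝ} {α : Type*} {l : Filter α} {u c : α → ℝ}
    (hu : Tendsto u l (𝓝 t₀)) (hc : Tendsto c l (𝓝 (L - t₀))) (ht₀ : 0 < t₀) (ht₀L : t₀ ≤ L)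
    (hsmall : 0 < κ → √κ * L < π) :
    Tendsto (fun i => modelSide κ (u i) (u i) (modelAngle κ (u i) L (c i))) l (𝓝 0) := by
  have hsmall' : 0 < κ → √κ * t₀ < π ∧ √κ * L < π := fun hκ =>
    ⟨lt_of_le_of_lt (mul_le_mul_of_nonneg_left ht₀L (sqrt_nonneg κ)) (hsmall hκ), hsmall hκ⟩
  have hangle := (continuousAt_modelAngle ht₀ (ht₀.trans_le ht₀L) hsmall').tendsto.comp
    (hu.prodMk_nhds (tendsto_const_nhds.prodMk_nhds hc))
  rw [modelAngle_sub_eq_zero ht₀ ht₀L hsmall] at hangle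
  have hside := ((continuous_modelSide_self κ).tendsto (t₀, 0)).comp (hu.prodMk_nhds hangle)
  rwa [modelSide_self_zero] at hside

section Geodesics

variable {X : Type*} [MetricSpace X] {γ η : ℝ → X} {a b c d : ℝ}

lemma IsGeodesicOn.mono (h : IsGeodesicOn γ a b) (hc : a ≤ c) (hd : d ≤ b) :
    IsGeodesicOn γ c d :=
  fun s hs t ht => h s ⟨hc.trans hs.1, hs.2.trans hd⟩ t ⟨hc.trans ht.1, ht.2.trans hd⟩

lemma IsGeodesicOn.congr (h : IsGeodesicOn γ a b) (hη : EqOn η γ (Icc a b)) :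
    IsGeodesicOn η a b := by
  intro s hs t ht
  rw [hη hs, hη ht]
  exact h s hs t ht

lemma IsGeodesicOn.dist_eq_sub (h : IsGeodesicOn γ a b) {s t : ℝ} (hs : s ∈ Icc a b)
    (ht : t ∈ Icc a b) (hst : s ≤ t) : dist (γ s) (γ t) = t - s := by
  rw [h s hs t ht, abs_sub_comm, abs_of_nonneg (sub_nonneg.2 hst)]

lemma isGeodesicOn_of_dist_eq_sub
    (h : ∀ s ∈ Icc a b, ∀ t ∈ Icc a b, s ≤ t → dist (γ s) (γ t) = t - s) :
    IsGeodesicOn γ a b := by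
  intro s hs t ht
  rcases le_total s t with hst | hts
  · rw [h s hs t ht hst, abs_sub_comm, abs_of_nonneg (sub_nonneg.2 hst)]
  · rw [dist_comm, h t ht s hs hts, abs_of_nonneg (sub_nonneg.2 hts)]

def IsGeodesicBetween (γ : ℝ → X) (x y : X) : Prop :=
  γ 0 = x ∧ γ (dist x y) = y ∧ IsGeodesicOn γ 0 (dist x y)

lemma IsGeodesicBetween.isGeodesicOn {x y : X} (h : IsGeodesicBetween γ x y) :
    IsGeodesicOn γ 0 (dist x y) :=
  h.2.2

lemma IsGeodesicBetween.dist_left {x y : X} (h : IsGeodesicBetween γ x y) {t : ℝ}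
    (ht : t ∈ Icc 0 (dist x y)) : dist x (γ t) = t := by
  rw [← h.1, h.isGeodesicOn.dist_eq_sub ⟨le_rfl, dist_nonneg⟩ ht ht.1, sub_zero]

lemma IsGeodesicBetween.dist_right {x y : X} (h : IsGeodesicBetween γ x y) {t : ℝ}
    (ht : t ∈ Icc 0 (dist x y)) : dist (γ t) y = dist x y - t := by
  conv_lhs => rw [← h.2.1]
  exact h.isGeodesicOn.dist_eq_sub ht ⟨dist_nonneg, le_rfl⟩ ht.2

lemma IsGeodesicOn.comp_neg (h : IsGeodesicOn γ a b) :
    IsGeodesicOn (fun t => γ (-t)) (-b) (-a) := by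
  intro s hs t ht
  rw [h (-s) ⟨by linarith [hs.2], by linarith [hs.1]⟩ (-t) ⟨by linarith [ht.2], by linarith [ht.1]⟩,
    neg_sub_neg, abs_sub_comm]

lemma IsGeodesicOn.piecewise {e : ℝ} (hγ : IsGeodesicOn γ c b) (hη : IsGeodesicOn η 0 e)
    (hjoin : η 0 = γ b) (hend : dist (γ c) (η e) = (b - c) + e) :
    IsGeodesicOn (fun t => if t ≤ b then γ t else η (t - b)) c (b + e) := by
  have hγ' : ∀ {s t}, c ≤ s → s ≤ t → t ≤ b → dist (γ s) (γ t) = t - s :=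
    fun hs hst ht => hγ.dist_eq_sub ⟨hs, hst.trans ht⟩ ⟨hs.trans hst, ht⟩ hst
  have hη' : ∀ {s t}, 0 ≤ s → s ≤ t → t ≤ e → dist (η s) (η t) = t - s :=
    fun hs hst ht => hη.dist_eq_sub ⟨hs, hst.trans ht⟩ ⟨hs.trans hst, ht⟩ hst
  refine isGeodesicOn_of_dist_eq_sub fun s hs t ht hst => ?_
  by_cases hsb : s ≤ b
  · by_cases htb : t ≤ b
    · simp only [if_pos hsb, if_pos htb]
      exact hγ' hs.1 hst htb
    · simp only [if_pos hsb, if_neg htb]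
      have hup := dist_triangle (γ s) (γ b) (η (t - b))
      have hlow := dist_triangle4 (γ c) (γ s) (η (t - b)) (η e)
      rw [hγ' hs.1 hsb le_rfl, ← hjoin, hη' le_rfl (by linarith) (by linarith [ht.2])] at hup
      rw [hend, hγ' le_rfl hs.1 hsb, hη' (by linarith) (by linarith [ht.2]) le_rfl] at hlow
      linarith
  · have htb : ¬t ≤ b := fun htb => hsb (hst.trans htb)
    simp only [if_neg hsb, if_neg htb]
    rw [hη' (by linarith) (by linarith) (by linarith [ht.2])]
    ring

lemma IsLocalGeodesicOn.mono (h : IsLocalGeodesicOn γ a b) (hc : a ≤ c) (hd : d ≤ b) :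
    IsLocalGeodesicOn γ c d := by
  intro t ht
  obtain ⟨ε, hε, hγ⟩ := h t ⟨hc.trans ht.1, ht.2.trans hd⟩
  exact ⟨ε, hε, hγ.mono (max_le_max hc le_rfl) (min_le_min hd le_rfl)⟩

lemma IsLocalGeodesicOn.congr (h : IsLocalGeodesicOn γ a b) (hη : EqOn η γ (Icc a b)) :
    IsLocalGeodesicOn η a b := by
  intro t ht
  obtain ⟨ε, hε, hγ⟩ := h t ht
  exact ⟨ε, hε, hγ.congr fun s hs =>
    hη ⟨(le_max_left _ _).trans hs.1, hs.2.trans (min_le_left _ _)⟩⟩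

lemma IsLocalGeodesicOn.comp_neg (h : IsLocalGeodesicOn γ a b) :
    IsLocalGeodesicOn (fun t => γ (-t)) (-b) (-a) := by
  intro t ht
  obtain ⟨ε, hε, hγ⟩ := h (-t) ⟨by linarith [ht.2], by linarith [ht.1]⟩
  refine ⟨ε, hε, ?_⟩
  convert hγ.comp_neg using 1 <;> simp only [← max_neg_neg, ← min_neg_neg] <;> ring_nf

lemma IsLocalGeodesicOn.exists_isGeodesicOn_end (h : IsLocalGeodesicOn γ a b) (hab : a < b) :
    ∃ ε > 0, IsGeodesicOn γ (b - ε) b := by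
  obtain ⟨ε, hε, hγ⟩ := h b ⟨hab.le, le_rfl⟩
  refine ⟨min ε (b - a), lt_min hε (by linarith), hγ.mono ?_ ?_⟩
  · exact max_le (by linarith [min_le_right ε (b - a)]) (by linarith [min_le_left ε (b - a)])
  · exact le_min le_rfl (by linarith)

lemma IsLocalGeodesicOn.of_isGeodesicOn (h : IsLocalGeodesicOn γ a b) (hγ : IsGeodesicOn γ c d)
    (hcb : c < b) : IsLocalGeodesicOn γ a d := by
  intro t ht
  by_cases htm : t ≤ (c + b) / 2
  · obtain ⟨ε, hε, hγt⟩ := h t ⟨ht.1, by linarith⟩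
    refine ⟨min ε ((b - c) / 2), lt_min hε (by linarith), hγt.mono ?_ ?_⟩
    · exact max_le_max le_rfl (by linarith [min_le_left ε ((b - c) / 2)])
    · exact (min_le_right _ _).trans (le_min (by linarith [min_le_right ε ((b - c) / 2)])
        (by linarith [min_le_left ε ((b - c) / 2)]))
  · refine ⟨(b - c) / 2, by linarith, hγ.mono ?_ (min_le_left _ _)⟩
    exact le_max_of_le_right (by linarith)

end Geodesics

lemma lt_two_mul_pi_div_sqrt {κ R x : ℝ} (hκ : 0 < κ) (hR : √κ * R ≤ π / 2) (hx : x < 4 * R) :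
    x < 2 * (π / √κ) := by
  have hs : 0 < √κ := sqrt_pos.2 hκ
  rw [mul_div_assoc', lt_div_iff₀ hs]
  nlinarith

section CAT

variable {Y : Type*} [MetricSpace Y] {κ : ℝ}

lemma CATComparison.dist_le_max (hCAT : CATComparison κ Y) {p q z : Y} {γ : ℝ → Y}
    (hγ : IsGeodesicBetween γ q z) (hpq : p ≠ q)
    (hsmall : 0 < κ → √κ * (dist p q + dist q z) ≤ π / 2) {t : ℝ}
    (ht : t ∈ Icc 0 (dist q z)) : dist p (γ t) ≤ max (dist p q) (dist p z) := by
  rcases (dist_nonneg (x := q) (y := z)).eq_or_lt with hqz | hqz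
  · rw [show t = 0 by linarith [ht.1, ht.2], hγ.1]
    exact le_max_left _ _
  have hpq' : 0 < dist p q := dist_pos.2 hpq
  have hper : 0 < κ → dist p q + dist q z + dist p z < 2 * (π / √κ) := fun hκ =>
    lt_two_mul_pi_div_sqrt hκ (hsmall hκ) (by linarith [dist_triangle p q z])
  refine (hCAT p q z γ hγ.1 hγ.2.1 hγ.isGeodesicOn hper t ht).trans ?_
  refine modelSide_modelAngle_le_max hpq' hqz ?_ (dist_triangle p q z) ht hsmall
  simpa only [dist_comm q z] using abs_dist_sub_le p z q

lemma CATComparison.dist_geodesic_le (hCAT : CATComparison κ Y) {q y y' : Y} {σ σ' : ℝ → Y}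
    (hσ : IsGeodesicBetween σ q y) (hσ' : IsGeodesicBetween σ' q y') {u : ℝ}
    (hu : u ∈ Icc 0 (dist q y)) (hu' : u ≤ dist q y')
    (hper : 0 < κ → u + dist q y' + dist (σ u) y' < 2 * (π / √κ)) :
    dist (σ u) (σ' u) ≤ modelSide κ u u (modelAngle κ u (dist q y') (dist (σ u) y')) := by
  have hd : dist (σ u) q = u := by rw [dist_comm]; exact hσ.dist_left hu
  have h := hCAT (σ u) q y' σ' hσ'.1 hσ'.2.1 hσ'.isGeodesicOn (by rw [hd]; exact hper) u ⟨hu.1, hu'⟩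
  rwa [hd] at h

lemma CATComparison.tendsto_geodesic (hCAT : CATComparison κ Y) {q : Y} {σ : Y → ℝ → Y}
    (hσ : ∀ y, IsGeodesicBetween (σ y) q y) {R : ℝ} (hR : 0 < κ → √κ * R ≤ π / 2)
    {α : Type*} {l : Filter α} {y : α → Y} {t : α → ℝ} {y₀ : Y} {t₀ : ℝ}
    (hy : Tendsto y l (𝓝 y₀)) (ht : Tendsto t l (𝓝 t₀)) (hty : ∀ i, t i ∈ Icc 0 (dist q (y i)))
    (ht₀ : t₀ ∈ Icc 0 (dist q y₀)) (hyR : ∀ i, dist q (y i) < R) (hy₀R : dist q y₀ < R) :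
    Tendsto (fun i => σ (y i) (t i)) l (𝓝 (σ y₀ t₀)) := by
  rcases ht₀.1.eq_or_lt with rfl | ht₀pos
  · rw [(hσ y₀).1]
    refine tendsto_iff_dist_tendsto_zero.2 (ht.congr fun i => ?_)
    rw [dist_comm, (hσ _).dist_left (hty i)]
  set u : α → ℝ := fun i => min (t i) t₀
  have hu : Tendsto u l (𝓝 t₀) := by simpa using ht.min (tendsto_const_nhds (x := t₀))
  have hu_mem : ∀ i, u i ∈ Icc 0 (dist q (y i)) := fun i =>
    ⟨le_min (hty i).1 ht₀pos.le, (min_le_left _ _).trans (hty i).2⟩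
  have hc : Tendsto (fun i => dist (σ (y i) (u i)) y₀) l (𝓝 (dist q y₀ - t₀)) := by
    refine (((tendsto_const_nhds (x := q)).dist hy).sub hu).congr_dist (squeeze_zero (fun _ => dist_nonneg)
      (fun i => ?_) (tendsto_iff_dist_tendsto_zero.1 hy))
    rw [Real.dist_eq, ← (hσ _).dist_right (hu_mem i), dist_comm (σ _ _), dist_comm (σ _ _)]
    exact abs_dist_sub_le _ _ _
  have hF := tendsto_modelSide_self_modelAngle hu hc ht₀pos ht₀.2 fun hκ =>
    (mul_le_mul_of_nonneg_left hy₀R.le (sqrt_nonneg κ)).trans_lt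
      ((hR hκ).trans_lt (by linarith [pi_pos]))
  have hbound : ∀ i, dist (σ (y i) (t i)) (σ y₀ t₀) ≤ (t i - u i)
      + modelSide κ (u i) (u i) (modelAngle κ (u i) (dist q y₀) (dist (σ (y i) (u i)) y₀))
      + (t₀ - u i) := by
    intro i
    have hper : 0 < κ → u i + dist q y₀ + dist (σ (y i) (u i)) y₀ < 2 * (π / √κ) := by
      refine fun hκ => lt_two_mul_pi_div_sqrt hκ (hR hκ) ?_
      have := dist_triangle (σ (y i) (u i)) q y₀
      rw [dist_comm _ q, (hσ _).dist_left (hu_mem i)] at this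
      linarith [(hu_mem i).2, hyR i]
    refine (dist_triangle4 _ (σ (y i) (u i)) (σ y₀ (u i)) _).trans (add_le_add (add_le_add
      (le_of_eq ?_) (hCAT.dist_geodesic_le (hσ _) (hσ _) (hu_mem i) ?_ hper)) (le_of_eq ?_))
    · rw [dist_comm]
      exact (hσ _).isGeodesicOn.dist_eq_sub (hu_mem i) (hty i) (min_le_left _ _)
    · exact (min_le_right _ _).trans ht₀.2
    · exact (hσ _).isGeodesicOn.dist_eq_sub ⟨(hu_mem i).1, (min_le_right _ _).trans ht₀.2⟩ ht₀
        (min_le_right _ _)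
  refine tendsto_iff_dist_tendsto_zero.2 (squeeze_zero (fun _ => dist_nonneg) hbound ?_)
  simpa using ((ht.sub hu).add hF).add ((tendsto_const_nhds (x := t₀)).sub hu)

lemma CATComparison.geodesic_mem_ball_diff_singleton (hCAT : CATComparison κ Y)
    {x q y : Y} {σ : ℝ → Y} (hσ : IsGeodesicBetween σ q y) {r : ℝ}
    (hr : 0 < κ → √κ * r ≤ π / 6) (hq : q ∈ ball x r \ {x}) (hy : y ∈ ball x r \ {x})
    (hne : dist q y ≠ dist q x + dist x y) {t : ℝ} (ht : t ∈ Icc 0 (dist q y)) :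
    σ t ∈ ball x r \ {x} := by
  have hxq : dist x q < r := by rw [dist_comm]; exact hq.1
  have hxy : dist x y < r := by rw [dist_comm]; exact hy.1
  have hqy : dist q y < 2 * r := by linarith [dist_triangle q x y, dist_comm q x]
  refine ⟨?_, fun hx => hne ?_⟩
  · have hsmall : 0 < κ → √κ * (dist x q + dist q y) ≤ π / 2 := fun hκ =>
      (mul_le_mul_of_nonneg_left (by linarith) (sqrt_nonneg κ) : √κ * _ ≤ √κ * (3 * r)).trans
        (by linarith [hr hκ])
    rw [mem_ball, dist_comm]
    exact (hCAT.dist_le_max hσ (Ne.symm hq.2) hsmall ht).trans_lt (max_lt hxq hxy)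
  · have hx : σ t = x := hx
    have hleft := hσ.dist_left ht
    have hright := hσ.dist_right ht
    rw [hx] at hleft hright
    linarith

/-- Each point slides to `q` along its geodesic from `q`: by convexity of small balls the
geodesic stays in the ball, and by `hne` it misses the center. -/
theorem CATComparison.contractibleSpace_ball_diff_singleton (hGS : IsGeodesicSpace Y)
    (hCAT : CATComparison κ Y) {x q : Y} {r : ℝ} (hr : 0 < κ → √κ * r ≤ π / 6)
    (hq : q ∈ ball x r \ {x}) (hne : ∀ y ∈ ball x r \ {x}, dist q y ≠ dist q x + dist x y) :
    ContractibleSpace ↥(ball x r \ {x}) := by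
  set S := ball x r \ {x}
  choose σ hσ using hGS q
  have hσ' : ∀ y, IsGeodesicBetween (σ y) q y := hσ
  have htime : ∀ (s : unitInterval) (y : S), (1 - (s : ℝ)) * dist q y ∈ Icc 0 (dist q y) :=
    fun s y => ⟨mul_nonneg (unitInterval.one_minus_nonneg s) dist_nonneg,
      mul_le_of_le_one_left dist_nonneg (unitInterval.one_minus_le_one s)⟩
  have hqS : ∀ y : S, dist q y < 2 * r := fun y => by
    linarith [dist_triangle q x y, mem_ball.1 hq.1, mem_ball'.1 y.2.1]
  have hcont : Continuous fun p : unitInterval × S => σ p.2 ((1 - (p.1 : ℝ)) * dist q p.2) := by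
    refine continuous_iff_continuousAt.2 fun p => ?_
    exact hCAT.tendsto_geodesic hσ' (R := 2 * r)
      (fun hκ => by rw [mul_left_comm]; linarith [hr hκ, pi_pos])
      ((by fun_prop : Continuous fun p : unitInterval × S => (p.2 : Y)).tendsto p)
      ((by fun_prop : Continuous fun p : unitInterval × S => (1 - (p.1 : ℝ)) * dist q p.2).tendsto p)
      (fun p => htime p.1 p.2) (htime p.1 p.2) (fun p => hqS p.2) (hqS p.2)
  refine (contractible_iff_id_nullhomotopic S).2 ⟨⟨q, hq⟩, ⟨?_⟩⟩
  exact
    { toFun := fun p => ⟨σ p.2 ((1 - (p.1 : ℝ)) * dist q p.2),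
        hCAT.geodesic_mem_ball_diff_singleton (hσ' _) hr hq p.2.2 (hne _ p.2.2) (htime p.1 p.2)⟩
      continuous_toFun := hcont.subtype_mk _
      map_zero_left := fun y => Subtype.ext (by simpa using (hσ' y).2.1)
      map_one_left := fun y => Subtype.ext (by simpa using (hσ' y).1) }

end CAT

section Extension

variable {X : Type*} [MetricSpace X] {κ : ℝ}

def ballDiffSingletonHomeomorph {U : Set X} {x : X} (hx : x ∈ U) {r : ℝ} (hball : ball x r ⊆ U) :
    ↥(ball (⟨x, hx⟩ : U) r \ {⟨x, hx⟩}) ≃ₜ ↥(ball x r \ {x}) where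
  toFun p := ⟨p.1.1, p.2.1, fun h => p.2.2 (Subtype.ext h)⟩
  invFun p := ⟨⟨p.1, hball p.2.1⟩, p.2.1, fun h => p.2.2 (congrArg Subtype.val h)⟩
  left_inv _ := rfl
  right_inv _ := rfl
  continuous_toFun := by fun_prop
  continuous_invFun := by fun_prop

lemma IsGeodesicSpace.exists_isGeodesicBetween {U : Set X} (hU : IsGeodesicSpace U) {x y : X}
    (hx : x ∈ U) (hy : y ∈ U) : ∃ γ : ℝ → X, IsGeodesicBetween γ x y :=
  let ⟨γ, h₀, h₁, hγ⟩ := hU ⟨x, hx⟩ ⟨y, hy⟩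
  ⟨fun t => γ t, congrArg Subtype.val h₀, congrArg Subtype.val h₁, hγ⟩

lemma exists_dist_eq_add_of_not_contractibleSpace {U : Set X} (hGS : IsGeodesicSpace U)
    (hCAT : CATComparison κ U) {x q : X} {r : ℝ} (hball : ball x r ⊆ U)
    (hr : 0 < κ → √κ * r ≤ π / 6) (hq : q ∈ ball x r \ {x})
    (hnc : ¬ ContractibleSpace ↥(ball x r \ {x})) :
    ∃ y ∈ ball x r \ {x}, dist q y = dist q x + dist x y := by
  by_contra! hne
  have hx : x ∈ U := hball (mem_ball_self (dist_nonneg.trans_lt hq.1))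
  have := hCAT.contractibleSpace_ball_diff_singleton hGS (x := ⟨x, hx⟩) (q := ⟨q, hball hq.1⟩) hr
    ⟨hq.1, fun h => hq.2 (congrArg Subtype.val h)⟩
    (fun y hy => hne y ⟨hy.1, fun h => hy.2 (Subtype.ext h)⟩)
  exact hnc (ballDiffSingletonHomeomorph hx hball).symm.contractibleSpace

theorem IsLocalGeodesicOn.exists_extension_right (hκ : CurvBoundedAbove κ X)
    (h : ∀ x : X, ∀ δ > (0:ℝ), ∃ r : ℝ, 0 < r ∧ r < δ ∧ ¬ ContractibleSpace ↥(ball x r \ {x}))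
    {γ : ℝ → X} {a b : ℝ} (hγ : IsLocalGeodesicOn γ a b) (hab : a < b) :
    ∃ e > 0, ∃ γ' : ℝ → X, IsLocalGeodesicOn γ' a (b + e) ∧ EqOn γ' γ (Icc a b) := by
  obtain ⟨U, hU, -, hGS, hCAT⟩ := hκ (γ b)
  obtain ⟨ρ, hρ, hρU⟩ := Metric.mem_nhds_iff.1 hU
  obtain ⟨ε, hε, hγε⟩ := hγ.exists_isGeodesicOn_end hab
  obtain ⟨r, hr, hrδ, hnc⟩ := h (γ b) (min (min ε ρ) (π / (6 * (√κ + 1)))) (by positivity)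
  have hrε : r < ε := hrδ.trans_le ((min_le_left _ _).trans (min_le_left _ _))
  have hball : ball (γ b) r ⊆ U :=
    (ball_subset_ball (hrδ.le.trans ((min_le_left _ _).trans (min_le_right _ _)))).trans hρU
  have hrκ : 0 < κ → √κ * r ≤ π / 6 := fun _ => by
    have hr' := (lt_div_iff₀ (by positivity)).1 (hrδ.trans_le (min_le_right _ _))
    nlinarith [pi_pos]
  set q := γ (b - r / 2)
  have hqx : dist q (γ b) = r / 2 := by
    rw [hγε.dist_eq_sub ⟨by linarith, by linarith⟩ ⟨by linarith, le_rfl⟩ (by linarith)]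
    ring
  have hq : q ∈ ball (γ b) r \ {γ b} :=
    ⟨by rw [mem_ball, hqx]; linarith, fun h => by rw [h, dist_self] at hqx; linarith⟩
  obtain ⟨y, hy, hqy⟩ := exists_dist_eq_add_of_not_contractibleSpace hGS hCAT hball hrκ hq hnc
  obtain ⟨η, hη⟩ := hGS.exists_isGeodesicBetween (hball (mem_ball_self hr)) (hball hy.1)
  refine ⟨dist (γ b) y, dist_pos.2 (Ne.symm hy.2), fun t => if t ≤ b then γ t else η (t - b), ?_,
    fun t ht => if_pos ht.2⟩
  have hconcat := (hγε.mono (c := b - r / 2) (by linarith) le_rfl).piecewise hη.isGeodesicOn hη.1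
    (by rw [hη.2.1, hqy, hqx]; ring)
  exact (hγ.congr fun t ht => if_pos ht.2).of_isGeodesicOn hconcat (by linarith)

end Extension

/-- **Lemma 2.2 (Busemann).** Let `X` be a metric space with an upper curvature bound.  If for
every `x ∈ X` there exist arbitrarily small `r > 0` such that the punctured ball
`B_r(x) \ {x}` is non-contractible, then `X` is locally geodesically complete. -/
theorem busemann_geodesic_completeness (X : Type u) [MetricSpace X]
    (hX : HasUpperCurvatureBound X)
    (h : ∀ x : X, ∀ δ > (0:ℝ), ∃ r : ℝ, 0 < r ∧ r < δ ∧
      ¬ ContractibleSpace ↥(Metric.ball x r \ {x})) :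
    LocallyGeodesicallyComplete X := by
  obtain ⟨κ, hκ⟩ := hX
  intro γ a b hab hγ
  obtain ⟨e₁, he₁, γ₁, hγ₁, hγ₁γ⟩ := hγ.exists_extension_right hκ h hab
  obtain ⟨e₂, he₂, γ₂, hγ₂, hγ₂γ₁⟩ := hγ₁.comp_neg.exists_extension_right hκ h (by linarith)
  refine ⟨min e₁ e₂, lt_min he₁ he₂, fun t => γ₂ (-t), ?_, fun t ht => ?_⟩
  · exact hγ₂.comp_neg.mono (by linarith [min_le_right e₁ e₂]) (by linarith [min_le_left e₁ e₂])
  · have hmem : -t ∈ Icc (-(b + e₁)) (-a) := ⟨by linarith [ht.2], by linarith [ht.1]⟩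
    calc γ₂ (-t) = γ₁ (- -t) := hγ₂γ₁ hmem
      _ = γ t := by rw [neg_neg]; exact hγ₁γ ht

end
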